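/- Let $S = K[x_1,\ldots,x_n]$ and let $I \subset S$ be a stable monomial ideal. If $x_{n-1}^t \in I$ for some $t > 0$, then $(x_1,\ldots,x_{n-1})^t \subseteq I$. -/
import Mathlib


open MvPolynomial

variable {K : Type*} [Field K] {n : ℕ}

/-- The total degree of an exponent vector. -/
def mdeg {n : ℕ} (m : Fin n →₀ ℕ) : ℕ := m.sum fun _ e => e

/-- `I` is a monomial ideal: it contains every monomial of each of its elements. -/
def IsMonomialIdeal (I : Ideal (MvPolynomial (Fin n) K)) : Prop :=
  ∀ f ∈ I, ∀ m ∈ f.support, (monomial m (1 : K)) ∈ I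

/-- `I` is stable: for every monomial `u ∈ I` with largest dividing variable `x_k`,
and every `i ≤ k`, the monomial `(x_i / x_k) * u` lies in `I`. -/
def IsStableIdeal (I : Ideal (MvPolynomial (Fin n) K)) : Prop :=
  ∀ m : Fin n →₀ ℕ, (monomial m (1 : K)) ∈ I →
    ∀ k i : Fin n, m k ≠ 0 → (∀ k', k < k' → m k' = 0) → i ≤ k →
      (monomial (m + Finsupp.single i 1 - Finsupp.single k 1) (1 : K)) ∈ I

/-- `I` is strongly stable: for every monomial `u ∈ I`, every variable `x_k` dividing `u`
and every `i ≤ k`, the monomial `(x_i / x_k) * u` lies in `I`. -/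
def IsStronglyStableIdeal (I : Ideal (MvPolynomial (Fin n) K)) : Prop :=
  ∀ m : Fin n →₀ ℕ, (monomial m (1 : K)) ∈ I →
    ∀ k i : Fin n, m k ≠ 0 → i ≤ k →
      (monomial (m + Finsupp.single i 1 - Finsupp.single k 1) (1 : K)) ∈ I

/-- `v <_lex u` for exponent vectors, lex order with `x_1 > x_2 > ⋯ > x_n`. -/
def lexLt {n : ℕ} (v u : Fin n →₀ ℕ) : Prop :=
  ∃ i : Fin n, (∀ j < i, v j = u j) ∧ v i < u i

/-- `I` is a lexsegment ideal. -/
def IsLexsegmentIdeal (I : Ideal (MvPolynomial (Fin n) K)) : Prop :=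
  IsMonomialIdeal I ∧
    ∀ u v : Fin n →₀ ℕ, (monomial u (1 : K)) ∈ I → mdeg v = mdeg u → lexLt u v →
      (monomial v (1 : K)) ∈ I

/-- The degree `j` piece of `S/I`, as the image of the degree `j` homogeneous polynomials. -/
noncomputable def Qpiece (I : Ideal (MvPolynomial (Fin n) K)) (j : ℕ) :
    Submodule K (MvPolynomial (Fin n) K ⧸ I) :=
  (homogeneousSubmodule (Fin n) K j).map (Ideal.Quotient.mkₐ K I).toLinearMap

/-- Multiplication by `g` maps `(S/I)_j` injectively (to `(S/I)_{j'}`). -/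
def QInj (I : Ideal (MvPolynomial (Fin n) K)) (g : MvPolynomial (Fin n) K)
    (j _j' : ℕ) : Prop :=
  ∀ f₁ ∈ Qpiece I j, ∀ f₂ ∈ Qpiece I j,
    Ideal.Quotient.mk I g * f₁ = Ideal.Quotient.mk I g * f₂ → f₁ = f₂

/-- Multiplication by `g` maps `(S/I)_j` onto `(S/I)_{j'}`. -/
def QSurj (I : Ideal (MvPolynomial (Fin n) K)) (g : MvPolynomial (Fin n) K)
    (j j' : ℕ) : Prop :=
  ∀ h ∈ Qpiece I j', ∃ f ∈ Qpiece I j, Ideal.Quotient.mk I g * f = h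

/-- Multiplication by `g` from `(S/I)_j` to `(S/I)_{j'}` has maximal rank. -/
def MulMaxRank (I : Ideal (MvPolynomial (Fin n) K)) (g : MvPolynomial (Fin n) K)
    (j j' : ℕ) : Prop :=
  QInj I g j j' ∨ QSurj I g j j'

lemma mdeg_eq (m : Fin n →₀ ℕ) : mdeg m = ∑ j, m j := by
  rw [mdeg, Finsupp.sum_fintype]; intro; rfl

lemma key (hn : 2 ≤ n) (I : Ideal (MvPolynomial (Fin n) K)) (hst : IsStableIdeal I)
    (t : ℕ)
    (h : (monomial (Finsupp.single (⟨n - 2, by omega⟩ : Fin n) t) (1 : K)) ∈ I) :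
    ∀ N (m : Fin n →₀ ℕ), (∑ j, m j * (n - 2 - (j : ℕ))) ≤ N → mdeg m = t →
      (∀ j : Fin n, n - 1 ≤ (j : ℕ) → m j = 0) → (monomial m (1 : K)) ∈ I := by
  intro N
  induction N with
  | zero =>
    intro m hw hdeg hsupp
    have hz : ∀ j : Fin n, (j : ℕ) < n - 2 → m j = 0 := by
      intro j hj
      have h0 := Finset.sum_eq_zero_iff.mp (Nat.le_zero.mp hw) j (Finset.mem_univ j)
      have h2 : n - 2 - (j : ℕ) ≠ 0 := by omega
      exact (Nat.mul_eq_zero.mp h0).resolve_right h2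
    have hm : m = Finsupp.single (⟨n - 2, by omega⟩ : Fin n) t := by
      ext j
      rw [Finsupp.single_apply]
      rcases lt_trichotomy (j : ℕ) (n - 2) with hlt | heq | hgt
      · rw [hz j hlt, if_neg]
        intro e; have : (n:ℕ) - 2 = (j:ℕ) := congrArg Fin.val e; omega
      · rw [if_pos (by exact Fin.ext heq.symm)]
        rw [mdeg_eq] at hdeg
        rw [← hdeg, Finset.sum_eq_single j]
        · intro b _ hb
          rcases lt_trichotomy (b : ℕ) (n - 2) with h1 | h2 | h3
          · exact hz b h1
          · exact absurd (Fin.ext (h2.trans heq.symm)) hb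
          · exact hsupp b (by omega)
        · intro hj; exact absurd (Finset.mem_univ j) hj
      · rw [hsupp j (by omega), if_neg]
        intro e; have : (n:ℕ) - 2 = (j:ℕ) := congrArg Fin.val e; omega
    rw [hm]; exact h
  | succ N ih =>
    intro m hw hdeg hsupp
    by_cases hz : ∀ j : Fin n, (j : ℕ) < n - 2 → m j = 0
    · refine ih m ?_ hdeg hsupp
      have h0 : (∑ j, m j * (n - 2 - (j : ℕ))) = 0 := by
        apply Finset.sum_eq_zero
        intro j _
        rcases lt_or_ge (j : ℕ) (n - 2) with h1 | h2
        · rw [hz j h1, zero_mul]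
        · have : n - 2 - (j : ℕ) = 0 := by omega
          rw [this, mul_zero]
      omega
    · push_neg at hz
      obtain ⟨i, hi, hmi⟩ := hz
      have hmi1 : 1 ≤ m i := Nat.pos_of_ne_zero hmi
      set k : Fin n := ⟨n - 2, by omega⟩ with hk
      have hki : (k : ℕ) = n - 2 := rfl
      have hik : i ≠ k := by
        intro e; have : (i : ℕ) = n - 2 := congrArg Fin.val e; omega
      set m'' : Fin n →₀ ℕ := m - Finsupp.single i 1 + Finsupp.single k 1 with hm''
      have happ : ∀ j, m'' j = m j - (if i = j then 1 else 0) + (if k = j then 1 else 0) := by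
        intro j
        rw [hm'', Finsupp.add_apply, Finsupp.tsub_apply, Finsupp.single_apply,
          Finsupp.single_apply]
      have hvi : m'' i = m i - 1 := by
        rw [happ, if_pos rfl, if_neg (by intro e; exact hik e.symm)]; omega
      have hvk : m'' k = m k + 1 := by
        rw [happ, if_neg hik, if_pos rfl]; omega
      have hvo : ∀ j, j ≠ i → j ≠ k → m'' j = m j := by
        intro j h1 h2
        rw [happ, if_neg (fun e => h1 e.symm), if_neg (fun e => h2 e.symm)]; omega
      -- degree of m''
      have hdeg'' : mdeg m'' = t := by
        have hterm : ∀ j : Fin n, m'' j + (if i = j then 1 else 0)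
            = m j + (if k = j then 1 else 0) := by
          intro j
          by_cases h1 : j = i
          · subst h1; rw [if_pos rfl, if_neg (fun e => hik e.symm), hvi]; omega
          · by_cases h2 : j = k
            · subst h2; rw [if_neg (fun e => h1 e.symm), if_pos rfl, hvk]
            · rw [if_neg (fun e => h1 e.symm), if_neg (fun e => h2 e.symm),
                hvo j h1 h2]
        have hs := Finset.sum_congr rfl (fun j (_ : j ∈ Finset.univ) => hterm j)
        rw [Finset.sum_add_distrib, Finset.sum_add_distrib,
          Finset.sum_ite_eq Finset.univ i (fun _ => 1),
          Finset.sum_ite_eq Finset.univ k (fun _ => 1)] at hs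
        simp only [Finset.mem_univ, if_pos] at hs
        rw [mdeg_eq] at hdeg ⊢
        omega
      -- support of m''
      have hsupp'' : ∀ j : Fin n, n - 1 ≤ (j : ℕ) → m'' j = 0 := by
        intro j hj
        rw [hvo j (by intro e; subst e; omega) (by intro e; have := congrArg Fin.val e; omega)]
        exact hsupp j hj
      -- weight of m''
      have hw'' : (∑ j, m'' j * (n - 2 - (j : ℕ))) ≤ N := by
        have hterm : ∀ j : Fin n, m'' j * (n - 2 - (j : ℕ))
            + (if i = j then n - 2 - (i : ℕ) else 0) = m j * (n - 2 - (j : ℕ)) := by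
          intro j
          by_cases h1 : j = i
          · subst h1
            rw [if_pos rfl, hvi]
            have e1 : m j = m j - 1 + 1 := by omega
            conv_rhs => rw [e1]
            rw [add_mul, one_mul]
          · by_cases h2 : j = k
            · rw [h2, hki, Nat.sub_self, mul_zero, mul_zero, if_neg hik]; omega
            · rw [if_neg (fun e => h1 e.symm), hvo j h1 h2, add_zero]
        have hs := Finset.sum_congr rfl (fun j (_ : j ∈ Finset.univ) => hterm j)
        rw [Finset.sum_add_distrib,
          Finset.sum_ite_eq Finset.univ i (fun _ => n - 2 - (i : ℕ))] at hs
        simp only [Finset.mem_univ, if_pos] at hs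
        omega
      have hmem'' := ih m'' hw'' hdeg'' hsupp''
      have hstep := hst m'' hmem'' k i (by omega)
        (by
          intro k' hkk'
          apply hsupp''
          rw [Fin.lt_def, hki] at hkk'
          omega)
        (by rw [Fin.le_def, hki]; omega)
      have hfinal : m'' + Finsupp.single i 1 - Finsupp.single k 1 = m := by
        ext j
        rw [Finsupp.tsub_apply, Finsupp.add_apply, Finsupp.single_apply,
          Finsupp.single_apply]
        by_cases h1 : j = i
        · subst h1
          rw [if_pos rfl, if_neg (fun e => hik e.symm), hvi]; omega
        · by_cases h2 : j = k
          · subst h2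
            rw [if_neg (fun e => h1 e.symm), if_pos rfl, hvk]; omega
          · rw [if_neg (fun e => h1 e.symm), if_neg (fun e => h2 e.symm),
              hvo j h1 h2]
            omega
      rwa [hfinal] at hstep

/-- If `I` is a stable monomial ideal and `x_{n-1}^t ∈ I` for some `t > 0`, then
`(x_1,…,x_{n-1})^t ⊆ I`. -/
theorem stmt_3 (hn : 2 ≤ n) (I : Ideal (MvPolynomial (Fin n) K))
    (hmon : IsMonomialIdeal I) (hst : IsStableIdeal I)
    (t : ℕ) (ht : 0 < t)
    (h : (X (⟨n - 2, by omega⟩ : Fin n) : MvPolynomial (Fin n) K) ^ t ∈ I) :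
    (Ideal.span ((fun i : Fin n => (X i : MvPolynomial (Fin n) K)) ''
        {i : Fin n | (i : ℕ) < n - 1})) ^ t ≤ I := by
  rw [X_pow_eq_monomial] at h
  rw [Ideal.span, Submodule.span_pow, Submodule.span_le]
  intro p hp
  obtain ⟨f, hf⟩ := Set.mem_pow.mp hp
  choose g hg1 hg2 using fun j : Fin t => (f j).2
  set m : Fin n →₀ ℕ := ∑ j : Fin t, Finsupp.single (g j) 1 with hm
  have happ : ∀ j' : Fin n, m j' = ∑ j : Fin t, (Finsupp.single (g j) (1 : ℕ)) j' :=
    fun j' => by rw [hm, Finsupp.finset_sum_apply]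
  have hdeg : mdeg m = t := by
    rw [mdeg_eq]
    calc ∑ j', m j' = ∑ j' : Fin n, ∑ j : Fin t, (if g j = j' then 1 else 0) :=
          Finset.sum_congr rfl fun j' _ => by
            rw [happ]; exact Finset.sum_congr rfl fun j _ => Finsupp.single_apply
      _ = ∑ j : Fin t, ∑ j' : Fin n, (if g j = j' then 1 else 0) := Finset.sum_comm
      _ = ∑ _j : Fin t, 1 := Finset.sum_congr rfl fun j _ => by
            rw [Finset.sum_ite_eq Finset.univ (g j) (fun _ => 1)]; simp
      _ = t := by simp
  have hsupp : ∀ j' : Fin n, n - 1 ≤ (j' : ℕ) → m j' = 0 := by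
    intro j' hj'
    rw [happ]
    apply Finset.sum_eq_zero
    intro j _
    rw [Finsupp.single_apply, if_neg]
    intro e
    have h1 := congrArg Fin.val e
    have h2 := hg1 j
    simp only [Set.mem_setOf_eq] at h2
    omega
  have hpm : p = monomial m (1 : K) := by
    rw [← hf, List.prod_ofFn,
      show (∏ j : Fin t, ((f j) : MvPolynomial (Fin n) K))
          = ∏ j : Fin t, monomial (Finsupp.single (g j) 1) (1 : K) from
        Finset.prod_congr rfl fun j _ => by rw [← hg2 j]; rfl,
      hm, monomial_sum_one]
  rw [hpm]
  exact key hn I hst t h _ m le_rfl hdeg hsupp
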